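/- For a continuous function f : D → Y defined on a convex subset D of a normed space X, with Y a normed space, the Lipschitz constant of f equals the supremum norm of its little Lipschitz derivative: ‖f‖_lip = sup_{x∈D} lip f(x). -/

import Mathlib

/-!
`lip f x ≤ ‖f‖_lip` holds pointwise, on any set. Conversely, suppose `lip f < C` on `D`.
Run along the unit-speed segment `γ` from `u` to `v`, which stays in `D` by convexity: the
function `t ↦ dist (f (γ t)) (f u)` is continuous and its upper right Dini derivative is at
most `C`, so the fencing theorem for such functions bounds it by `C t`. Hence `f` is
`C`-Lipschitz on `D`.
-/

open Metric Filter ENNReal Topology Set NNReal AffineMap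

section

variable {α β : Type*}

/-- The diagonal `u = v` may be included in the supremum: there the quotient is `0 / 0 = 0`. -/
noncomputable def lipNormOn [PseudoEMetricSpace α] [PseudoEMetricSpace β] (D : Set α)
    (f : α → β) : ℝ≥0∞ :=
  ⨆ u ∈ D, ⨆ v ∈ D, edist (f u) (f v) / edist u v

noncomputable def lipAt [PseudoMetricSpace α] [PseudoEMetricSpace β] (D : Set α) (f : α → β)
    (x : α) : ℝ≥0∞ :=
  liminf (fun r : ℝ => ⨆ u ∈ D ∩ ball x r, edist (f u) (f x) / ENNReal.ofReal r) (𝓝[>] 0)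

theorem LipschitzOnWith.lipNormOn_le [PseudoEMetricSpace α] [PseudoEMetricSpace β] {D : Set α}
    {f : α → β} {K : ℝ≥0} (h : LipschitzOnWith K f D) : lipNormOn D f ≤ K :=
  iSup₂_le fun _u hu => iSup₂_le fun _v hv => ENNReal.div_le_of_le_mul (h hu hv)

theorem lipAt_le_lipNormOn [PseudoMetricSpace α] [PseudoEMetricSpace β] {D : Set α}
    {f : α → β} {x : α} (hx : x ∈ D) : lipAt D f x ≤ lipNormOn D f := by
  refine liminf_le_of_frequently_le' (Eventually.frequently (Eventually.of_forall fun r =>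
    iSup₂_le fun w hw => ?_))
  calc edist (f w) (f x) / ENNReal.ofReal r ≤ edist (f w) (f x) / edist w x := by
        refine ENNReal.div_le_div_left ?_ _
        rw [edist_dist]
        exact ENNReal.ofReal_le_ofReal (mem_ball.1 hw.2).le
    _ ≤ lipNormOn D f := le_iSup₂_of_le w hw.1 (le_iSup₂_of_le x hx le_rfl)

theorem frequently_dist_lt_of_lipAt_lt [PseudoMetricSpace α] [PseudoMetricSpace β] {D : Set α}
    {f : α → β} {x : α} {C : ℝ≥0} (h : lipAt D f x < C) :
    ∃ᶠ r in 𝓝[>] 0, ∀ w ∈ D, dist w x ≤ r → dist (f w) (f x) < C * r := by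
  obtain ⟨s, hs, hsC⟩ := ENNReal.lt_iff_exists_nnreal_btwn.1 h
  have hs0 : 0 < (s : ℝ) := NNReal.coe_pos.2 (ENNReal.coe_pos.1 (pos_of_gt hs))
  have hsC : (s : ℝ) < C := ENNReal.coe_lt_coe.1 hsC
  have hC0 : 0 < (C : ℝ) := hs0.trans hsC
  -- a radius `ρ` that works for the open ball gives the closed ball of radius `(s / C) * ρ`
  have hscale : Tendsto (fun ρ : ℝ => s / C * ρ) (𝓝[>] 0) (𝓝[>] 0) :=
    tendsto_iff_comap.2 (comap_mulLeft_nhdsGT_zero (div_pos hs0 hC0)).ge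
  refine hscale.frequently (((frequently_lt_of_liminf_lt (by isBoundedDefault) hs).and_eventually
    self_mem_nhdsWithin).mono fun ρ ⟨hρ, (hρ0 : 0 < ρ)⟩ w hw hwx => ?_)
  have hwρ : w ∈ D ∩ ball x ρ := by
    refine ⟨hw, mem_ball.2 (hwx.trans_lt ?_)⟩
    calc (s : ℝ) / C * ρ < 1 * ρ := by gcongr; exact (div_lt_one hC0).2 hsC
      _ = ρ := one_mul ρ
  have hlt := (le_iSup₂ (f := fun u (_ : u ∈ D ∩ ball x ρ) =>
    edist (f u) (f x) / ENNReal.ofReal ρ) w hwρ).trans_lt hρ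
  rw [ENNReal.div_lt_iff (Or.inl (ENNReal.ofReal_pos.2 hρ0).ne') (Or.inl ofReal_ne_top),
    edist_dist, ← ENNReal.ofReal_coe_nnreal, ← ENNReal.ofReal_mul s.coe_nonneg,
    ENNReal.ofReal_lt_ofReal_iff (by positivity)] at hlt
  calc dist (f w) (f x) < s * ρ := hlt
    _ = C * (s / C * ρ) := by field_simp

theorem dist_le_of_lipAt_lt_of_isometry [PseudoMetricSpace α] [PseudoMetricSpace β] {D : Set α}
    {f : α → β} (hf : ContinuousOn f D) {C : ℝ≥0} (h : ∀ x ∈ D, lipAt D f x < C)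
    {γ : ℝ → α} (hγ : Isometry γ) {a b : ℝ} (hγD : MapsTo γ (Icc a b) D) :
    ∀ t ∈ Icc a b, dist (f (γ t)) (f (γ a)) ≤ C * (t - a) := by
  set g : ℝ → ℝ := fun t => dist (f (γ t)) (f (γ a))
  have hg : ContinuousOn g (Icc a b) :=
    continuous_dist.comp_continuousOn
      ((hf.comp hγ.continuous.continuousOn hγD).prodMk continuousOn_const)
  refine image_le_of_liminf_slope_right_le_deriv_boundary hg (by simp [g])
    (by fun_prop)
    (fun t _ => (((hasDerivAt_id t).sub_const a).const_mul (C : ℝ)).hasDerivWithinAt)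
    fun t ht r hr => ?_
  have hshift : Tendsto (t + ·) (𝓝[>] 0) (𝓝[>] t) :=
    tendsto_nhdsWithin_iff.2 ⟨((continuous_const_add t).tendsto' 0 t (add_zero t)).mono_left
      nhdsWithin_le_nhds, eventually_nhdsWithin_of_forall fun ρ hρ => lt_add_of_pos_right t hρ⟩
  refine hshift.frequently (((frequently_dist_lt_of_lipAt_lt
    (h (γ t) (hγD (Ico_subset_Icc_self ht)))).and_eventually
    (Ioo_mem_nhdsGT (sub_pos.2 ht.2))).mono fun ρ ⟨hρ, hρ0, hρb⟩ => ?_)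
  have hmem : t + ρ ∈ Icc a b := ⟨by linarith [ht.1], by linarith⟩
  have hstep : dist (f (γ (t + ρ))) (f (γ t)) < C * ρ :=
    hρ _ (hγD hmem) (by simp [hγ.dist_eq, abs_of_pos hρ0])
  have htri := dist_triangle (f (γ (t + ρ))) (f (γ t)) (f (γ a))
  have hCr : (C : ℝ) * ρ < r * ρ := by gcongr; simpa using hr
  rw [slope_def_field, add_sub_cancel_left, div_lt_iff₀ hρ0]
  linarith

theorem isometry_lineMap_div_dist {E : Type*} [NormedAddCommGroup E] [NormedSpace ℝ E] {u v : E}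
    (huv : u ≠ v) : Isometry fun t : ℝ => lineMap u v (t / dist u v) := by
  have hd : 0 < dist u v := dist_pos.2 huv
  refine Isometry.of_dist_eq fun s t => ?_
  rw [dist_lineMap_lineMap, Real.dist_eq, Real.dist_eq, div_sub_div_same, abs_div, abs_of_pos hd,
    div_mul_cancel₀ _ hd.ne']

theorem Convex.lipschitzOnWith_of_lipAt_lt {E : Type*} [NormedAddCommGroup E] [NormedSpace ℝ E]
    [PseudoMetricSpace β] {D : Set E} (hD : Convex ℝ D) {f : E → β} (hf : ContinuousOn f D)
    {C : ℝ≥0} (h : ∀ x ∈ D, lipAt D f x < C) : LipschitzOnWith C f D := by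
  refine LipschitzOnWith.of_dist_le_mul fun v hv u hu => ?_
  rcases eq_or_ne u v with rfl | huv
  · simp
  have hd : 0 < dist u v := dist_pos.2 huv
  have hmaps : MapsTo (fun t : ℝ => lineMap u v (t / dist u v)) (Icc 0 (dist u v)) D :=
    fun t ht => hD.lineMap_mem hu hv ⟨div_nonneg ht.1 hd.le, div_le_one_of_le₀ ht.2 hd.le⟩
  simpa [div_self hd.ne', dist_comm v u] using
    dist_le_of_lipAt_lt_of_isometry hf h (isometry_lineMap_div_dist huv) hmaps _
      (right_mem_Icc.2 hd.le)

theorem Convex.lipNormOn_eq_iSup_lipAt {E : Type*} [NormedAddCommGroup E] [NormedSpace ℝ E]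
    [PseudoMetricSpace β] {D : Set E} (hD : Convex ℝ D) {f : E → β} (hf : ContinuousOn f D) :
    lipNormOn D f = ⨆ x ∈ D, lipAt D f x := by
  refine le_antisymm ?_ (iSup₂_le fun x hx => lipAt_le_lipNormOn hx)
  by_contra! hlt
  obtain ⟨C, hC, hCL⟩ := ENNReal.lt_iff_exists_nnreal_btwn.1 hlt
  exact hCL.not_ge (hD.lipschitzOnWith_of_lipAt_lt hf
    fun x hx => (le_iSup₂ (f := fun x _ => lipAt D f x) x hx).trans_lt hC).lipNormOn_le

end

/-- For a continuous f on a convex set D, ‖f‖_lip = ‖lip f‖_∞. -/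
theorem lipNorm_eq_sup_lip {X Y : Type*} [NormedAddCommGroup X] [NormedSpace ℝ X]
    [NormedAddCommGroup Y] (D : Set X) (hD : Convex ℝ D) (f : X → Y)
    (hf : ContinuousOn f D) :
    (⨆ u ∈ D, ⨆ v ∈ D, edist (f u) (f v) / edist u v) =
      ⨆ x ∈ D, liminf (fun r : ℝ => ⨆ u ∈ D ∩ ball x r,
        edist (f u) (f x) / ENNReal.ofReal r) (𝓝[>] (0:ℝ)) :=
  hD.lipNormOn_eq_iSup_lipAt hf
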